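/- arXiv:2511.22290 — 3 statements merged into one kernel-verified Lean document; each statement's English description precedes it below -/
import Mathlib

section
/- Let C (control) and T (target) be data qubits and A an ancilla prepared in |+⟩. Performing a Z⊗Z parity measurement on (C,A), then an X⊗X parity measurement on (A,T), then measuring A in the Z basis, and applying the appropriate Pauli corrections conditioned on the three measurement outcomes, implements the CNOT gate from C to T. In particular, for each triple of outcomes the resulting map on (C,T) is a nonzero scalar multiple of a Pauli correction times CNOT. -/
/-! Write the outcomes as s₁ = (-1)^m and s₂ = (-1)^n with bits m, n. On ψ ⊗ |+⟩ ⊗ φ the ZZ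
projection is diagonal and keeps exactly the ancilla values a = c + m, correlating the ancilla
with the control. The XX projection followed by ⟨b| on the ancilla then leaves φ untouched on the
control branch c = b + m and applies s₂ X to the target on the branch c = b + m + 1. Up to the
factor 1/(2√2), this is |k⟩⟨k| ⊗ 1 + s₂ |k+1⟩⟨k+1| ⊗ X with k = b + m, which equals
(-1)^(n k) (Z^n ⊗ X^k) CNOT. -/

open Matrix Kronecker

noncomputable section

abbrev Q := Fin 2
abbrev MQ := Matrix Q Q ℂ

/-- Pauli X matrix. -/
def PX : MQ := !![0, 1; 1, 0]
/-- Pauli Z matrix. -/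
def PZ : MQ := !![1, 0; 0, -1]
/-- Hadamard matrix. -/
def Had : MQ := (((Real.sqrt 2 : ℝ) : ℂ))⁻¹ • !![1, 1; 1, -1]

def ket0 : Q → ℂ := ![1, 0]
def ket1 : Q → ℂ := ![0, 1]
/-- |+⟩ = (|0⟩+|1⟩)/√2 -/
def ketP : Q → ℂ := (((Real.sqrt 2 : ℝ) : ℂ))⁻¹ • ![1, 1]

/-- Tensor product of two single-qubit states. -/
def tp2 (u v : Q → ℂ) : Q × Q → ℂ := fun p => u p.1 * v p.2
/-- Tensor product of three single-qubit states, grouped ((1,2),3). -/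
def tp3 (u v w : Q → ℂ) : (Q × Q) × Q → ℂ := fun p => u p.1.1 * v p.1.2 * w p.2

/-- Standard CNOT, first factor control, second target. -/
def CNOT2 : Matrix (Q × Q) (Q × Q) ℂ :=
  Matrix.of fun p q => if p.1 = q.1 ∧ p.2 = q.2 + q.1 then 1 else 0

/-- Single-qubit Pauli corrections: I, X, Z, XZ. -/
def IsPauli (P : MQ) : Prop := P = 1 ∨ P = PX ∨ P = PZ ∨ P = PX * PZ

/-- Z-copy spider (green) as a 4×2 matrix. -/
def dZm : Matrix (Q × Q) Q ℂ := Matrix.of fun p b => if p.1 = b ∧ p.2 = b then 1 else 0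
/-- Z-merge spider (green) as a 2×4 matrix. -/
def mZm : Matrix Q (Q × Q) ℂ := Matrix.of fun b p => if p.1 = b ∧ p.2 = b then 1 else 0
/-- X-copy spider (red): δ_X|±⟩=|±±⟩. -/
def dXm : Matrix (Q × Q) Q ℂ :=
  Matrix.of fun p b => if p.1 + p.2 = b then (((Real.sqrt 2 : ℝ) : ℂ))⁻¹ else 0
/-- X-merge spider (red): μ_X|±±⟩=|±⟩. -/
def mXm : Matrix Q (Q × Q) ℂ :=
  Matrix.of fun b p => if p.1 + p.2 = b then (((Real.sqrt 2 : ℝ) : ℂ))⁻¹ else 0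
/-- Swap of the middle two wires of four, grouped ((1,2),(3,4)). -/
def Smid : Matrix ((Q × Q) × (Q × Q)) ((Q × Q) × (Q × Q)) ℂ :=
  Matrix.of fun p q =>
    if p.1.1 = q.1.1 ∧ p.1.2 = q.2.1 ∧ p.2.1 = q.1.2 ∧ p.2.2 = q.2.2 then 1 else 0

/-- ZZ-parity projector with sign s on wires (C,A) of (C,A,T). -/
def PZZCA (s : ℂ) : Matrix ((Q × Q) × Q) ((Q × Q) × Q) ℂ :=
  (2:ℂ)⁻¹ • (1 + s • ((PZ ⊗ₖ PZ) ⊗ₖ (1 : MQ)))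
/-- XX-parity projector with sign s on wires (A,T) of (C,A,T). -/
def PXXAT (s : ℂ) : Matrix ((Q × Q) × Q) ((Q × Q) × Q) ℂ :=
  (2:ℂ)⁻¹ • (1 + s • (((1 : MQ) ⊗ₖ PX) ⊗ₖ PX))

lemma PZ_eq_diagonal : PZ = diagonal fun x : Q => (-1) ^ (x : ℕ) := by
  ext i j; fin_cases i <;> fin_cases j <;> simp [PZ]

lemma PX_apply (i j : Q) : PX i j = if j = i + 1 then 1 else 0 := by
  fin_cases i <;> fin_cases j <;> simp [PX]

lemma PZ_pow_eq_diagonal (n : ℕ) : PZ ^ n = diagonal fun x : Q => (-1) ^ (n * x) := by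
  simp [PZ_eq_diagonal, diagonal_pow, pow_mul']

lemma PX_pow_apply (m i j : Q) : (PX ^ (m : ℕ)) i j = if j = i + m then 1 else 0 := by
  fin_cases m <;> simp [PX_apply, one_apply, eq_comm]

lemma isPauli_PZ_pow (n : Q) : IsPauli (PZ ^ (n : ℕ)) := by
  fin_cases n <;> simp [IsPauli]

lemma isPauli_PX_pow (m : Q) : IsPauli (PX ^ (m : ℕ)) := by
  fin_cases m <;> simp [IsPauli]

lemma exists_neg_one_pow_eq_of_sign {s : ℂ} (hs : s = 1 ∨ s = -1) :
    ∃ m : Q, s = (-1) ^ (m : ℕ) := by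
  rcases hs with rfl | rfl
  exacts [⟨0, by simp⟩, ⟨1, by simp⟩]

lemma ketP_apply (a : Q) : ketP a = ((Real.sqrt 2 : ℝ) : ℂ)⁻¹ := by
  fin_cases a <;> simp [ketP]

lemma inv_two_mul_one_add_neg_one_pow_eq_ite (m c a : Q) :
    (2⁻¹ : ℂ) * (1 + (-1) ^ (m : ℕ) * ((-1) ^ (c : ℕ) * (-1) ^ (a : ℕ))) =
      if c + a = m then 1 else 0 := by
  fin_cases m <;> fin_cases c <;> fin_cases a <;> norm_num; rfl

lemma PZZCA_neg_one_pow_eq_diagonal (m : Q) :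
    PZZCA ((-1) ^ (m : ℕ)) = diagonal fun p => if p.1.1 + p.1.2 = m then 1 else 0 := by
  rw [PZZCA, PZ_eq_diagonal, diagonal_kronecker_diagonal, ← diagonal_one (n := Q),
    diagonal_kronecker_diagonal, ← diagonal_one, ← diagonal_smul, diagonal_add, ← diagonal_smul]
  congr 1
  ext p
  simp [inv_two_mul_one_add_neg_one_pow_eq_ite]

lemma PXXAT_mulVec (s : ℂ) (v : (Q × Q) × Q → ℂ) :
    PXXAT s *ᵥ v = fun p => 2⁻¹ * (v p + s * v ((p.1.1, p.1.2 + 1), p.2 + 1)) := by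
  have hXX : (((1 : MQ) ⊗ₖ PX) ⊗ₖ PX) *ᵥ v = fun p => v ((p.1.1, p.1.2 + 1), p.2 + 1) := by
    ext ⟨⟨c, a⟩, t⟩
    simp [mulVec, dotProduct, Fintype.sum_prod_type, PX_apply, one_apply]
  ext p
  simp [PXXAT, smul_mulVec, add_mulVec, hXX, mul_add]

lemma CNOT2_mulVec_tp2 (ψ φ : Q → ℂ) : CNOT2 *ᵥ tp2 ψ φ = fun p => ψ p.1 * φ (p.2 + p.1) := by
  ext ⟨c, t⟩
  fin_cases c <;> fin_cases t <;> simp [CNOT2, mulVec, dotProduct, Fintype.sum_prod_type, tp2]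

lemma PXXAT_mul_PZZCA_mulVec_tp3_apply (m n b c t : Q) (ψ φ : Q → ℂ) :
    ((PXXAT ((-1) ^ (n : ℕ)) * PZZCA ((-1) ^ (m : ℕ))) *ᵥ tp3 ψ ketP φ) ((c, b), t) =
      (2⁻¹ * ((Real.sqrt 2 : ℝ) : ℂ)⁻¹) * ψ c *
        if c = b + m then φ t else (-1) ^ (n : ℕ) * φ (t + 1) := by
  rw [← mulVec_mulVec, PXXAT_mulVec, PZZCA_neg_one_pow_eq_diagonal]
  simp only [mulVec_diagonal, tp3, ketP_apply]
  fin_cases m <;> fin_cases b <;> fin_cases c <;> simp <;> ring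

lemma PZ_pow_kronecker_PX_pow_mul_CNOT2_mulVec_tp2_apply (m n c t : Q) (ψ φ : Q → ℂ) :
    ((((PZ ^ (n : ℕ)) ⊗ₖ (PX ^ (m : ℕ))) * CNOT2) *ᵥ tp2 ψ φ) (c, t) =
      (-1) ^ ((n : ℕ) * c) * ψ c * φ (t + m + c) := by
  rw [← mulVec_mulVec, CNOT2_mulVec_tp2, PZ_pow_eq_diagonal]
  simp [mulVec, dotProduct, Fintype.sum_prod_type, PX_pow_apply, diagonal_apply, mul_assoc]

lemma PXXAT_mul_PZZCA_mulVec_tp3_eq_smul (m n b : Q) (ψ φ : Q → ℂ) :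
    (fun p : Q × Q =>
        ((PXXAT ((-1) ^ (n : ℕ)) * PZZCA ((-1) ^ (m : ℕ))) *ᵥ tp3 ψ ketP φ) ((p.1, b), p.2)) =
      ((-1) ^ ((n : ℕ) * (b + m : Q)) * (2⁻¹ * ((Real.sqrt 2 : ℝ) : ℂ)⁻¹)) •
        ((((PZ ^ (n : ℕ)) ⊗ₖ (PX ^ ((b + m : Q) : ℕ))) * CNOT2) *ᵥ tp2 ψ φ) := by
  have add_one_add_one : ∀ t : Q, t + 1 + 1 = t := by decide
  ext ⟨c, t⟩
  rw [PXXAT_mul_PZZCA_mulVec_tp3_apply, Pi.smul_apply,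
    PZ_pow_kronecker_PX_pow_mul_CNOT2_mulVec_tp2_apply, smul_eq_mul]
  fin_cases m <;> fin_cases n <;> fin_cases b <;> fin_cases c <;> simp [add_one_add_one] <;> ring

/-- The lattice-surgery CNOT of Horsman et al.: for every outcome triple
(s₁, s₂, b), the composite ⟨b|_A ∘ P_XX(s₂)_{A,T} ∘ P_ZZ(s₁)_{C,A} on inputs
ψ_C ⊗ |+⟩_A ⊗ φ_T is a nonzero scalar multiple of a Pauli correction times
CNOT from C to T. -/
theorem stmt2 :
    ∀ s1 s2 : ℂ, (s1 = 1 ∨ s1 = -1) → (s2 = 1 ∨ s2 = -1) → ∀ b : Q,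
      ∃ c : ℂ, c ≠ 0 ∧ ∃ P T : MQ, IsPauli P ∧ IsPauli T ∧
        ∀ ψ φ : Q → ℂ,
          (fun p : Q × Q => ((PXXAT s2 * PZZCA s1).mulVec (tp3 ψ ketP φ)) ((p.1, b), p.2))
          = c • (((P ⊗ₖ T) * CNOT2).mulVec (tp2 ψ φ)) := by
  intro s1 s2 hs1 hs2 b
  obtain ⟨m, rfl⟩ := exists_neg_one_pow_eq_of_sign hs1
  obtain ⟨n, rfl⟩ := exists_neg_one_pow_eq_of_sign hs2
  refine ⟨_, ?_, _, _, isPauli_PZ_pow n, isPauli_PX_pow (b + m),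
    PXXAT_mul_PZZCA_mulVec_tp3_eq_smul m n b⟩
  simp
end
end

section
/- Complementarity/bialgebra interaction of the two spiders: δ_X ∘ μ_Z = (1/√2)·(μ_Z ⊗ μ_Z) ∘ (I ⊗ SWAP ⊗ I) ∘ (δ_X ⊗ δ_X) as linear maps ℂ²⊗ℂ² → ℂ²⊗ℂ², where μ_Z|b⟩⊗|b'⟩ = δ_{bb'}|b⟩ is the Z-merge and δ_X is the X-copy. -/
open Matrix Kronecker

noncomputable section

/-! Composing with `μ_Z ⊗ μ_Z` and the middle swap only reindexes rows, so the right-hand side at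
`((a, c), (q, q'))` is `√2 · δ_X((a, c), q) · δ_X((a, c), q')`. This vanishes for `q ≠ q'`, and for
`q = q'` it equals `δ_X((a, c), q)` because the entries of `δ_X` lie in `{0, 1/√2}`. -/

lemma mul_mZm_apply {m : Type*} (M : Matrix m Q ℂ) (p : m) (q : Q × Q) :
    (M * mZm) p q = if q.1 = q.2 then M p q.1 else 0 := by
  simp [mZm, mul_apply, ite_and, eq_comm (a := q.2)]

lemma kronecker_mZm_mul_apply {n : Type*} (N : Matrix ((Q × Q) × (Q × Q)) n ℂ) (b c : Q)
    (r : n) : ((mZm ⊗ₖ mZm) * N) (b, c) r = N ((b, b), (c, c)) r := by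
  simp [mZm, mul_apply, Fintype.sum_prod_type, ite_and, kroneckerMap_apply]

lemma Smid_mul_apply {n : Type*} (N : Matrix ((Q × Q) × (Q × Q)) n ℂ) (a b c d : Q) (r : n) :
    (Smid * N) ((a, b), (c, d)) r = N ((a, c), (b, d)) r := by
  simp [Smid, mul_apply, Fintype.sum_prod_type, ite_and]

lemma dXm_mul_dXm_of_ne (p : Q × Q) {q q' : Q} (h : q ≠ q') : dXm p q * dXm p q' = 0 := by
  simp only [dXm, of_apply]
  split_ifs <;> simp_all

lemma sqrt_two_mul_dXm_mul_self (p : Q × Q) (q : Q) :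
    ((Real.sqrt 2 : ℝ) : ℂ) * (dXm p q * dXm p q) = dXm p q := by
  have hsqrt : ((Real.sqrt 2 : ℝ) : ℂ) ≠ 0 := by simp
  simp only [dXm, of_apply]
  split_ifs
  · rw [← mul_assoc, mul_inv_cancel₀ hsqrt, one_mul]
  · simp

/-- The ZX bialgebra rule between the Z-merge and the X-copy:
δ_X ∘ μ_Z = √2 · (μ_Z ⊗ μ_Z) ∘ (I⊗SWAP⊗I) ∘ (δ_X ⊗ δ_X). -/
theorem stmt14 :
    dXm * mZm
      = ((Real.sqrt 2 : ℝ) : ℂ) • ((mZm ⊗ₖ mZm) * Smid * (dXm ⊗ₖ dXm)) := by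
  ext ⟨a, c⟩ ⟨q, q'⟩
  rw [mul_mZm_apply, Matrix.smul_apply, Matrix.mul_assoc, kronecker_mZm_mul_apply, Smid_mul_apply,
    kroneckerMap_apply, smul_eq_mul]
  by_cases h : q = q'
  · rw [if_pos h, ← h, sqrt_two_mul_dXm_mul_self]
  · rw [if_neg h, dXm_mul_dXm_of_ne _ h, mul_zero]
end
end

section
/- Pauli correction propagation for the lattice-surgery CNOT: for measurement outcomes s₁, s₂ ∈ {+1,−1} of the ZZ and XX merges and outcome b ∈ {0,1} of the final Z-measurement of the ancilla, there exist functions a(s₁,s₂,b), c(s₁,s₂,b) ∈ {0,1} and a nonzero scalar (depending on (s₁,s₂,b)) such that for all |ψ⟩, |φ⟩ the composite map ⟨b|_A ∘ ((I+s₂X⊗X)/2)_{A,T} ∘ ((I+s₁Z⊗Z)/2)_{C,A} applied to |ψ⟩_C⊗|+⟩_A⊗|φ⟩_T equals that nonzero scalar times (Z_C^{a} ⊗ X_T^{c}) · CNOT_{C→T} (|ψ⟩_C⊗|φ⟩_T). -/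
open Matrix Kronecker

noncomputable section

lemma mv_ZZ (s : ℂ) (w : (Q × Q) × Q → ℂ) :
    (PZZCA s).mulVec w
      = fun p => (2:ℂ)⁻¹ * (w p + s * ((if p.1.1 = p.1.2 then 1 else -1) * w p)) := by
  funext p
  obtain ⟨⟨i, a⟩, t⟩ := p
  fin_cases i <;> fin_cases a <;> fin_cases t <;>
    · simp [PZZCA, PZ, Matrix.mulVec, dotProduct, Fintype.sum_prod_type, Fin.sum_univ_two,
        Matrix.one_apply, Prod.ext_iff]
      ring

lemma mv_XX (s : ℂ) (w : (Q × Q) × Q → ℂ) :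
    (PXXAT s).mulVec w
      = fun p => (2:ℂ)⁻¹ * (w p + s * w ((p.1.1, p.1.2 + 1), p.2 + 1)) := by
  funext p
  obtain ⟨⟨i, a⟩, t⟩ := p
  fin_cases i <;> fin_cases a <;> fin_cases t <;>
    · simp [PXXAT, PX, Matrix.mulVec, dotProduct, Fintype.sum_prod_type, Fin.sum_univ_two,
        Matrix.one_apply, Prod.ext_iff]
      ring

set_option maxHeartbeats 1600000 in
/-- Pauli-frame propagation for the lattice-surgery CNOT: there exist exponent
functions a, c ∈ {0,1} and nonzero scalars, depending only on the outcomes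
(s₁, s₂, b), such that every outcome branch equals the scalar times
(Z^a ⊗ X^c)·CNOT. -/
theorem stmt16 :
    ∃ (a cexp : ℂ → ℂ → Q → ℕ) (sc : ℂ → ℂ → Q → ℂ),
      ∀ s1 s2 : ℂ, (s1 = 1 ∨ s1 = -1) → (s2 = 1 ∨ s2 = -1) → ∀ b : Q,
        sc s1 s2 b ≠ 0 ∧ a s1 s2 b ≤ 1 ∧ cexp s1 s2 b ≤ 1 ∧
        ∀ ψ φ : Q → ℂ,
          (fun p : Q × Q => ((PXXAT s2 * PZZCA s1).mulVec (tp3 ψ ketP φ)) ((p.1, b), p.2))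
          = sc s1 s2 b •
              ((((PZ ^ (a s1 s2 b)) ⊗ₖ (PX ^ (cexp s1 s2 b))) * CNOT2).mulVec (tp2 ψ φ)) := by
  classical
  have hs2 : ((Real.sqrt 2 : ℝ) : ℂ) ≠ 0 :=
    Complex.ofReal_ne_zero.mpr (by positivity)
  refine ⟨fun s1 s2 b => if s2 = 1 then 0 else 1,
    fun s1 s2 b => if s1 = 1 then b.val else 1 - b.val,
    fun s1 s2 b =>
      (if s2 = -1 ∧ ((s1 = 1 ∧ b = 1) ∨ (s1 = -1 ∧ b = 0)) then -1 else 1) *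
        (((Real.sqrt 2 : ℝ) : ℂ))⁻¹ * (2:ℂ)⁻¹, ?_⟩
  rintro s1 s2 (rfl | rfl) (rfl | rfl) b <;> fin_cases b <;>
    refine ⟨by norm_num [hs2], by norm_num, by norm_num, fun ψ φ => ?_⟩ <;>
    · rw [← Matrix.mulVec_mulVec, mv_ZZ, mv_XX, ← Matrix.mulVec_mulVec]
      norm_num
      funext p
      obtain ⟨i, j⟩ := p
      fin_cases i <;> fin_cases j <;>
        · simp only [tp3, tp2, ketP, CNOT2, PZ, PX, Matrix.mulVec, dotProduct,
            Fintype.sum_prod_type, Fin.sum_univ_two, Matrix.mul_apply,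
            Matrix.one_apply, Matrix.kroneckerMap_apply, Matrix.of_apply,
            Pi.smul_apply, smul_eq_mul, pow_zero, pow_one, Prod.mk.injEq,
            Matrix.cons_val', Matrix.cons_val_zero, Matrix.cons_val_one,
            Matrix.head_cons, Matrix.head_fin_const, Matrix.empty_val',
            Matrix.cons_val_fin_one, show (2:Q) = 0 from rfl]
          norm_num
          try simp [tp2, CNOT2, PZ, PX, Matrix.mulVec, dotProduct, Fintype.sum_prod_type,
            Fin.sum_univ_two, Matrix.mul_apply, Matrix.kroneckerMap_apply, Prod.ext_iff]
          try ring
end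
end
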